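/- arXiv:1512.08476 — 3 statements merged into one kernel-verified Lean document; each statement's English description precedes it below -/
import Mathlib

section
/- Let T be a bounded linear operator on L² induced by a K⁰-kernel 𝐓 satisfying condition (iv), let {βₙ} be a complex sequence with βₙ → 0, and set λₙ(λ) = λ(1 − βₙλ)⁻¹. Then for every compact subset K of ∇_s({βₙI + Tₙ}) and each fixed s ∈ ℝ, sup_{λ∈K} ‖𝐭_{n|λₙ(λ)}(s) − 𝐭_{|λ}(s)‖_{L²} → 0 as n → ∞ (the quantity being defined for all sufficiently large n). -/
open MeasureTheory Filter Topology ContinuousLinearMap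
open scoped ENNReal NNReal

noncomputable section

/-- `L²(ℝ)`, the complex Hilbert space of square-integrable functions on `ℝ`. -/
abbrev L2 : Type := MeasureTheory.Lp ℂ 2 (MeasureTheory.volume : MeasureTheory.Measure ℝ)

/-- Bounded linear operators on `L²`. -/
abbrev L2op : Type := L2 →L[ℂ] L2

/-- `T` is the integral operator induced by the kernel `K`:
`(Tf)(s) = ∫ K(s,t) f(t) dt` for every `f ∈ L²` and almost every `s`. -/
def IsInducedBy (T : L2op) (K : ℝ → ℝ → ℂ) : Prop :=
  ∀ f : L2, ∀ᵐ s : ℝ, (T f : ℝ → ℂ) s = ∫ t : ℝ, K s t * (f : ℝ → ℂ) t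

/-- `K` is a `K⁰`-kernel with associated Carleman functions `kt`, `kt'`:
`kt s = conj (K s ·)` and `kt' s = K · s` as elements of `L²`, the kernel is
continuous and vanishes at infinity, and both Carleman functions are continuous
and vanish at infinity in `L²`-norm. -/
structure IsK0Kernel (K : ℝ → ℝ → ℂ) (kt kt' : ℝ → L2) : Prop where
  repr_t : ∀ s : ℝ, (kt s : ℝ → ℂ) =ᵐ[volume] fun x => (starRingEnd ℂ) (K s x)
  repr_t' : ∀ s : ℝ, (kt' s : ℝ → ℂ) =ᵐ[volume] fun x => K x s
  cont : Continuous fun p : ℝ × ℝ => K p.1 p.2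
  vanish : Tendsto (fun p : ℝ × ℝ => K p.1 p.2) (cocompact (ℝ × ℝ)) (𝓝 0)
  cont_t : Continuous kt
  vanish_t : Tendsto kt (cocompact ℝ) (𝓝 0)
  cont_t' : Continuous kt'
  vanish_t' : Tendsto kt' (cocompact ℝ) (𝓝 0)

/-- The set `Π(T)` of regular values of `T`: those `λ` for which `I - λT` is invertible. -/
def regularSet (T : L2op) : Set ℂ := {lam : ℂ | IsUnit (1 - lam • T)}

/-- The resolvent `R_λ(T) = (I - λT)⁻¹` (junk value `0` if `λ ∉ Π(T)`). -/
def res (T : L2op) (lam : ℂ) : L2op := Ring.inverse (1 - lam • T)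

/-- The Fredholm resolvent `T_{|λ} = T R_λ(T)`. -/
def fres (T : L2op) (lam : ℂ) : L2op := T * res T lam

/-- The region of boundedness `∇_b({Sₙ})`. -/
def nablaB (S : ℕ → L2op) : Set ℂ :=
  {ζ : ℂ | ζ ≠ 0 ∧ ∃ M : ℝ, 0 < M ∧ ∃ N : ℕ, ∀ n > N,
      ζ ∈ regularSet (S n) ∧ ‖fres (S n) ζ‖ ≤ M}

/-- The region of strong convergence `∇_s({Sₙ})`: the `ζ ∈ ∇_b({Sₙ})` such that
the Fredholm resolvents `S_{n|ζ}` converge in the strong operator topology. -/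
def nablaS (S : ℕ → L2op) : Set ℂ :=
  {ζ : ℂ | ζ ∈ nablaB S ∧
    ∀ f : L2, ∃ g : L2, Tendsto (fun n => fres (S n) ζ f) atTop (𝓝 g)}

/-- Nuclear (trace class) operator on `L²`. -/
def IsNuclear (T : L2op) : Prop :=
  ∃ g h : ℕ → L2, Summable (fun k => ‖g k‖ * ‖h k‖) ∧
    ∀ f : L2, T f = ∑' k : ℕ, (inner ℂ f (g k) : ℂ) • h k

/-- The characteristic function `χ` of the interval `(-τ, τ)`, with complex values. -/
def chi (t : ℝ) (x : ℝ) : ℂ := Set.indicator (Set.Ioo (-t) t) 1 x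

/-- Condition (iv) for a `K⁰`-kernel `K` inducing `T`: the positive reals `τ n`
strictly increase to `+∞`, `P n` is the orthogonal projection given by multiplication
by `χₙ = chi (τ n)`, the subkernels `Kₙ(s,t) = χₙ(s)K(s,t)` and
`K̃ₙ(s,t) = χₙ(s)K(s,t)χₙ(t)` are `K⁰`-kernels, and the induced operators
`Tₙ = PₙT` and `T̃ₙ = PₙTPₙ` are nuclear. -/
structure ConditionIV (K : ℝ → ℝ → ℂ) (T : L2op) (tau : ℕ → ℝ) (P : ℕ → L2op) : Prop where
  pos : ∀ n, 0 < tau n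
  mono : StrictMono tau
  tendsto_top : Tendsto tau atTop atTop
  proj : ∀ n, ∀ f : L2, (P n f : ℝ → ℂ) =ᵐ[volume] fun x => chi (tau n) x * (f : ℝ → ℂ) x
  subker : ∀ n, ∃ kt kt' : ℝ → L2, IsK0Kernel (fun s t => chi (tau n) s * K s t) kt kt'
  subker' : ∀ n, ∃ kt kt' : ℝ → L2,
      IsK0Kernel (fun s t => chi (tau n) s * K s t * chi (tau n) t) kt kt'
  nuclear : ∀ n, IsNuclear (P n * T)
  nuclear' : ∀ n, IsNuclear (P n * T * P n)

/-- `λₙ(λ) = λ(1 - βₙλ)⁻¹`. -/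
def lamn (b : ℕ → ℂ) (lam : ℂ) (n : ℕ) : ℂ := lam * (1 - b n * lam)⁻¹

/-- The resolvent kernel for `K` at `λ` built from the resolvent Carleman function
`𝐭'_{|λ}(t) = R_λ(T)(kt' t)`:  `𝐓_{|λ}(s,t) = λ⟨𝐭'_{|λ}(t), 𝐭(s)⟩ + 𝐓(s,t)`
(the paper's inner product `⟨a,b⟩ = ∫ a conj b` is `inner b a` in Mathlib). -/
def resKer (T : L2op) (K : ℝ → ℝ → ℂ) (kt kt' : ℝ → L2) (lam : ℂ) (s t : ℝ) : ℂ :=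
  lam * (inner ℂ (kt s) (res T lam (kt' t)) : ℂ) + K s t

/-- The resolvent kernel for the subkernel `Kₙ` at `λ`:
`𝐓_{n|λ}(s,t) = λ χₙ(s) ⟨𝐭'_{n|λ}(t), 𝐭(s)⟩ + 𝐓ₙ(s,t)`, where
`𝐭'_{n|λ}(t) = R_λ(Tₙ) Pₙ (kt' t)` and `𝐓ₙ(s,t) = χₙ(s) 𝐓(s,t)`. -/
def resKerN (T : L2op) (K : ℝ → ℝ → ℂ) (kt kt' : ℝ → L2) (taun : ℝ) (Pn : L2op)
    (lam : ℂ) (s t : ℝ) : ℂ :=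
  lam * chi taun s * (inner ℂ (kt s) (res (Pn * T) lam (Pn (kt' t))) : ℂ) + chi taun s * K s t

/-- `R` is a resolvent kernel for the `K⁰`-kernel `K` at `λ` (Definition 2 of the paper):
`R` is a `K⁰`-kernel satisfying the two simultaneous integral equations and the
square-integrability condition. -/
def IsResolventKernel (K : ℝ → ℝ → ℂ) (lam : ℂ) (R : ℝ → ℝ → ℂ) : Prop :=
  (∃ rt rt' : ℝ → L2, IsK0Kernel R rt rt') ∧
  (∀ s t : ℝ, R s t - lam * ∫ x : ℝ, K s x * R x t = K s t) ∧
  (∀ s t : ℝ, R s t - lam * ∫ x : ℝ, R s x * K x t = K s t) ∧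
  (∀ f : L2, ∫⁻ s : ℝ, ((‖∫ t : ℝ, R s t * (f : ℝ → ℂ) t‖₊ : ℝ≥0) : ℝ≥0∞) ^ 2 < ⊤)

/-!
Put `Sₙ = βₙ I + Tₙ` and `v = 𝐭(s)`. Since `I - λₙ(λ) Tₙ = (1 - βₙλ)⁻¹ (I - λ Sₙ)`, the resolvent
`R_{λₙ(λ)}(Tₙ)` is `(1 - βₙλ) R_λ(Sₙ)`, so it suffices that `R_λ(Sₙ)* v → R_λ(T)* v` uniformly
on `K`. Perturbing `I - λSₙ` around finitely many points of `K` bounds `‖R_λ(Sₙ)‖` uniformly on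
`K` for large `n`, and as `Sₙ → T` strongly, the strong limit of `R_λ(Sₙ)` inverts `I - λT`.
The resolvent identity gives `R_λ(Sₙ)* v - R_λ(T)* v = R_λ(Sₙ)* (λ(Sₙ - T))* R_λ(T)* v`, and
`Sₙ* = conj βₙ I + T* Pₙ → T*` strongly, hence uniformly on the compact set
`{R_λ(T)* v | λ ∈ K}`.
-/

section StrongConvergence

variable {𝕜 E F : Type*} [RCLike 𝕜] [NormedAddCommGroup E] [NormedSpace 𝕜 E]
  [NormedAddCommGroup F] [NormedSpace 𝕜 F]

theorem tendsto_apply_of_tendsto_of_norm_le {ι : Type*} {l : Filter ι} {A : ι → E →L[𝕜] F}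
    {A₀ : E →L[𝕜] F} {C : ℝ} (hA : ∀ x, Tendsto (fun i => A i x) l (𝓝 (A₀ x)))
    (hC : ∀ᶠ i in l, ‖A i‖ ≤ C) {x : ι → E} {x₀ : E} (hx : Tendsto x l (𝓝 x₀)) :
    Tendsto (fun i => A i (x i)) l (𝓝 (A₀ x₀)) := by
  have hsmall : Tendsto (fun i => A i (x i - x₀)) l (𝓝 0) := by
    refine squeeze_zero_norm' ?_ (by simpa using (tendsto_sub_nhds_zero_iff.2 hx).norm.const_mul C)
    filter_upwards [hC] with i hi
    exact (A i).le_of_opNorm_le hi _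
  simpa using hsmall.add (hA x₀)

theorem tendstoUniformlyOn_of_tendsto_of_norm_le {ι : Type*} {l : Filter ι}
    {A : ι → E →L[𝕜] F} {A₀ : E →L[𝕜] F} {C : ℝ} (hA : ∀ x, Tendsto (fun i => A i x) l (𝓝 (A₀ x)))
    (hC : ∀ i, ‖A i‖ ≤ C) {W : Set E} (hW : IsCompact W) :
    TendstoUniformlyOn (fun i x => A i x) A₀ l W := by
  rw [Metric.tendstoUniformlyOn_iff]
  intro ε hε
  set D := max C 0 + ‖A₀‖ + 1
  have hD : 0 < D := by positivity
  obtain ⟨t, -, ht, hWt⟩ :=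
    finite_cover_balls_of_compact hW (div_pos hε (by positivity : 0 < 2 * D))
  have hnet : ∀ᶠ i in l, ∀ y ∈ t, dist (A i y) (A₀ y) < ε / 2 :=
    ht.eventually_all.2 fun y _ => (hA y) (Metric.ball_mem_nhds _ (half_pos hε))
  filter_upwards [hnet] with i hi x hx
  obtain ⟨y, hy, hxy⟩ := Set.mem_iUnion₂.1 (hWt hx)
  rw [Metric.mem_ball, dist_eq_norm] at hxy
  have hfar : ‖(A₀ - A i) (x - y)‖ < ε / 2 := calc
    ‖(A₀ - A i) (x - y)‖ ≤ D * ‖x - y‖ := by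
      refine (A₀ - A i).le_of_opNorm_le ((norm_sub_le _ _).trans ?_) _
      linarith [hC i, le_max_left C 0]
    _ < D * (ε / (2 * D)) := mul_lt_mul_of_pos_left hxy hD
    _ = ε / 2 := by field_simp
  have hnear := hi y hy
  rw [dist_eq_norm] at hnear ⊢
  calc ‖A₀ x - A i x‖ = ‖(A₀ - A i) (x - y) - (A i y - A₀ y)‖ := by
        simp only [sub_apply, map_sub]; abel_nf
    _ < ε := by linarith [norm_sub_le ((A₀ - A i) (x - y)) (A i y - A₀ y)]

theorem isUnit_of_tendsto_of_tendsto_inverse [CompleteSpace E] {A : ℕ → E →L[𝕜] E}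
    {A₀ : E →L[𝕜] E} {C M : ℝ} (hA : ∀ x, Tendsto (fun n => A n x) atTop (𝓝 (A₀ x)))
    (hC : ∀ᶠ n in atTop, ‖A n‖ ≤ C) (hunit : ∀ᶠ n in atTop, IsUnit (A n))
    (hM : ∀ᶠ n in atTop, ‖Ring.inverse (A n)‖ ≤ M)
    (hinv : ∀ x, ∃ y, Tendsto (fun n => Ring.inverse (A n) x) atTop (𝓝 y)) :
    IsUnit A₀ := by
  choose g hg using hinv
  let B : E →L[𝕜] E := continuousLinearMapOfTendsto _ (tendsto_pi_nhds.2 hg)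
  have hB : ∀ x, Tendsto (fun n => Ring.inverse (A n) x) atTop (𝓝 (B x)) := hg
  have hright : A₀ * B = 1 := by
    ext x
    refine tendsto_nhds_unique (tendsto_apply_of_tendsto_of_norm_le hA hC (hB x)) ?_
    refine tendsto_const_nhds.congr' ?_
    filter_upwards [hunit] with n hn
    rw [← mul_apply_eq_comp, Ring.mul_inverse_cancel _ hn, one_apply_eq_self]
  have hleft : B * A₀ = 1 := by
    ext x
    refine tendsto_nhds_unique (tendsto_apply_of_tendsto_of_norm_le hB hM (hA x)) ?_
    refine tendsto_const_nhds.congr' ?_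
    filter_upwards [hunit] with n hn
    rw [← mul_apply_eq_comp, Ring.inverse_mul_cancel _ hn, one_apply_eq_self]
  exact ⟨⟨A₀, B, hright, hleft⟩, rfl⟩

end StrongConvergence

theorem adjoint_inverse_sub_adjoint_inverse {𝕜 E : Type*} [RCLike 𝕜] [NormedAddCommGroup E]
    [InnerProductSpace 𝕜 E] [CompleteSpace E] {A B : E →L[𝕜] E} (hA : IsUnit A) (hB : IsUnit B) :
    adjoint (Ring.inverse B) - adjoint (Ring.inverse A)
      = adjoint (Ring.inverse B) * adjoint (A - B) * adjoint (Ring.inverse A) := by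
  simp only [← star_eq_adjoint, ← Ring.inverse_star, star_sub]
  exact Ring.inverse_sub_inverse (by simp [hA, hB])

theorem isUnit_smul_iff₀ {𝕜 R : Type*} [Field 𝕜] [Ring R] [Algebra 𝕜 R] {c : 𝕜} (hc : c ≠ 0)
    (x : R) : IsUnit (c • x) ↔ IsUnit x := by
  rw [← Units.smul_isUnit hc.isUnit, isUnit_smul_iff]

theorem Ring.inverse_smul {𝕜 R : Type*} [Field 𝕜] [Ring R] [Algebra 𝕜 R] {c : 𝕜} (hc : c ≠ 0)
    (x : R) : Ring.inverse (c • x) = c⁻¹ • Ring.inverse x := by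
  by_cases hx : IsUnit x
  · simpa using (Ring.inverse_mul_eq_iff_eq_mul (c • x) 1 _ ((isUnit_smul_iff₀ hc x).2 hx)).2 (by
      rw [smul_mul_smul_comm, mul_inv_cancel₀ hc, one_smul, Ring.mul_inverse_cancel _ hx])
  · rw [Ring.inverse_non_unit _ hx, Ring.inverse_non_unit _ ((isUnit_smul_iff₀ hc x).not.2 hx),
      smul_zero]

theorem norm_inverse_one_sub_le {R : Type*} [NormedRing R] [HasSummableGeomSeries R] {t : R}
    (ht : ‖t‖ ≤ 1 / 2) : ‖Ring.inverse (1 - t)‖ ≤ ‖(1 : R)‖ + 1 := by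
  have ht1 : ‖t‖ < 1 := by linarith
  rw [← geom_series_eq_inverse t ht1]
  refine (tsum_geometric_le_of_norm_lt_one t ht1).trans ?_
  have : (1 - ‖t‖)⁻¹ ≤ 2 := by rw [inv_le_comm₀ (by linarith) two_pos]; linarith
  linarith

theorem TendstoUniformlyOn.smul_of_norm_le {ι α 𝕜 E : Type*} [NormedField 𝕜]
    [SeminormedAddCommGroup E] [NormedSpace 𝕜 E] {l : Filter ι} {K : Set α} {c : ι → α → 𝕜}
    {F : ι → α → E} {f : α → E} {R : ℝ} (hc : TendstoUniformlyOn c (fun _ => 1) l K)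
    (hF : TendstoUniformlyOn F f l K) (hR : ∀ᶠ i in l, ∀ x ∈ K, ‖F i x‖ ≤ R) :
    TendstoUniformlyOn (fun i x => c i x • F i x) f l K := by
  rw [Metric.tendstoUniformlyOn_iff] at hc hF ⊢
  intro ε hε
  set R' := max R 0
  filter_upwards [hc (ε / (2 * (R' + 1))) (by positivity), hF (ε / 2) (half_pos hε), hR]
    with i hci hFi hRi x hx
  have hcF : ‖(1 - c i x) • F i x‖ ≤ ε / (2 * (R' + 1)) * R' := by
    rw [norm_smul, ← dist_eq_norm]
    exact mul_le_mul (hci x hx).le ((hRi x hx).trans (le_max_left _ _)) (norm_nonneg _)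
      (by positivity)
  have hR' : ε / (2 * (R' + 1)) * R' ≤ ε / 2 := by
    rw [div_mul_eq_mul_div, div_le_div_iff₀ (by positivity) two_pos]
    nlinarith [le_max_right R 0]
  have hFx := hFi x hx
  rw [dist_eq_norm] at hFx ⊢
  calc ‖f x - c i x • F i x‖ = ‖(f x - F i x) + (1 - c i x) • F i x‖ := by
        rw [sub_smul, one_smul]; abel_nf
    _ < ε := by linarith [norm_add_le (f x - F i x) ((1 - c i x) • F i x), hFx]

theorem TendstoUniformlyOn.tendsto_iSup_norm_sub {ι α E : Type*} [SeminormedAddCommGroup E]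
    {l : Filter ι} {K : Set α} {F : ι → α → E} {f : α → E} (h : TendstoUniformlyOn F f l K) :
    Tendsto (fun i => ⨆ x ∈ K, ‖F i x - f x‖) l (𝓝 0) := by
  rw [Metric.tendstoUniformlyOn_iff] at h
  rw [Metric.tendsto_nhds]
  intro ε hε
  filter_upwards [h (ε / 2) (half_pos hε)] with i hi
  have hsup : ⨆ x ∈ K, ‖F i x - f x‖ ≤ ε / 2 :=
    Real.iSup_le (fun x => Real.iSup_le (fun hx => by
      rw [← dist_eq_norm, dist_comm]; exact (hi x hx).le) (half_pos hε).le) (half_pos hε).le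
  have hnonneg : 0 ≤ ⨆ x ∈ K, ‖F i x - f x‖ :=
    Real.iSup_nonneg fun x => Real.iSup_nonneg fun _ => norm_nonneg _
  rw [Real.dist_0_eq_abs, abs_of_nonneg hnonneg]
  linarith

theorem eventually_forall_norm_mul_lt {ι R : Type*} [SeminormedRing R] {l : Filter ι}
    {β : ι → R} (hβ : Tendsto β l (𝓝 0)) {K : Set R} (hK : Bornology.IsBounded K) {ε : ℝ}
    (hε : 0 < ε) : ∀ᶠ i in l, ∀ z ∈ K, ‖β i * z‖ < ε := by
  obtain ⟨C, hC0, hC⟩ := hK.exists_pos_norm_le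
  filter_upwards [(tendsto_zero_iff_norm_tendsto_zero.1 hβ).eventually_lt_const
    (div_pos hε hC0)] with i hi z hz
  calc ‖β i * z‖ ≤ ‖β i‖ * C := (norm_mul_le _ _).trans (by gcongr; exact hC z hz)
    _ < ε := (lt_div_iff₀ hC0).1 hi

theorem tendsto_eLpNorm_of_dominated {α E : Type*} [MeasurableSpace α] {μ : Measure α}
    [NormedAddCommGroup E] {p : ℝ≥0∞} (hp0 : p ≠ 0) (hp : p ≠ ∞) {F : ℕ → α → E} {g : α → ℝ}
    (hF : ∀ n, AEStronglyMeasurable (F n) μ) (hg : MemLp g p μ)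
    (h_le : ∀ n, ∀ᵐ x ∂μ, ‖F n x‖ ≤ g x) (h_lim : ∀ᵐ x ∂μ, Tendsto (fun n => F n x) atTop (𝓝 0)) :
    Tendsto (fun n => eLpNorm (F n) p μ) atTop (𝓝 0) := by
  have hp_pos : 0 < p.toReal := ENNReal.toReal_pos hp0 hp
  simp_rw [eLpNorm_eq_lintegral_rpow_enorm_toReal hp0 hp]
  have hint : Tendsto (fun n => ∫⁻ x, ‖F n x‖ₑ ^ p.toReal ∂μ) atTop (𝓝 (∫⁻ _, 0 ∂μ)) := by
    refine tendsto_lintegral_of_dominated_convergence' (fun x => ‖g x‖ₑ ^ p.toReal)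
      (fun n => (hF n).enorm.pow_const _) (fun n => ?_)
      (lintegral_rpow_enorm_lt_top_of_eLpNorm_lt_top hp0 hp hg.eLpNorm_lt_top).ne ?_
    · filter_upwards [h_le n] with x hx
      exact ENNReal.rpow_le_rpow (enorm_le_iff_norm_le.2 (hx.trans (Real.le_norm_self _))) hp_pos.le
    · filter_upwards [h_lim] with x hx
      simpa [Function.comp_def, ENNReal.zero_rpow_of_pos hp_pos] using
        (((ENNReal.continuous_rpow_const (y := p.toReal)).tendsto _).comp hx.enorm)
  simpa [Function.comp_def, ENNReal.zero_rpow_of_pos (inv_pos.2 hp_pos)] using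
    ((ENNReal.continuous_rpow_const (y := p.toReal⁻¹)).tendsto _).comp hint

theorem chi_eq_zero_or_one (τ x : ℝ) : chi τ x = 0 ∨ chi τ x = 1 := by
  unfold chi Set.indicator
  split_ifs <;> simp

theorem norm_chi_le_one (τ x : ℝ) : ‖chi τ x‖ ≤ 1 := by
  rcases chi_eq_zero_or_one τ x with h | h <;> simp [h]

theorem conj_chi (τ x : ℝ) : starRingEnd ℂ (chi τ x) = chi τ x := by
  rcases chi_eq_zero_or_one τ x with h | h <;> simp [h]

theorem chi_eq_one_of_abs_lt {τ x : ℝ} (h : |x| < τ) : chi τ x = 1 := by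
  rw [abs_lt] at h
  simp [chi, Set.indicator_of_mem (show x ∈ Set.Ioo (-τ) τ from h)]

def IsMulChi (p : L2op) (τ : ℝ) : Prop :=
  ∀ f : L2, (p f : ℝ → ℂ) =ᵐ[volume] fun x => chi τ x * (f : ℝ → ℂ) x

namespace IsMulChi

variable {p : L2op} {τ : ℝ}

theorem norm_apply_le (hp : IsMulChi p τ) (f : L2) : ‖p f‖ ≤ ‖f‖ := by
  refine Lp.norm_le_norm_of_ae_le ?_
  filter_upwards [hp f] with x hx
  rw [hx, norm_mul]
  exact mul_le_of_le_one_left (norm_nonneg _) (norm_chi_le_one τ x)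

theorem adjoint_eq (hp : IsMulChi p τ) : adjoint p = p := by
  refine ((eq_adjoint_iff p p).2 fun f g => ?_).symm
  rw [L2.inner_def, L2.inner_def]
  refine integral_congr_ae ?_
  filter_upwards [hp f, hp g] with x hf hg
  simp only [hf, hg, RCLike.inner_apply, map_mul, conj_chi]
  ring

theorem norm_le_one (hp : IsMulChi p τ) : ‖p‖ ≤ 1 :=
  opNorm_le_bound _ zero_le_one fun f => by simpa using hp.norm_apply_le f

theorem norm_smul_one_add_mul_le (hp : IsMulChi p τ) (β : ℂ) (A : L2op) :
    ‖β • (1 : L2op) + p * A‖ ≤ ‖β‖ * ‖(1 : L2op)‖ + ‖A‖ :=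
  (norm_add_le _ _).trans (add_le_add (norm_smul_le β (1 : L2op))
    ((norm_mul_le _ _).trans (mul_le_of_le_one_left (norm_nonneg _) hp.norm_le_one)))

end IsMulChi

theorem tendsto_apply_of_isMulChi {P : ℕ → L2op} {τ : ℕ → ℝ} (hP : ∀ n, IsMulChi (P n) (τ n))
    (hτ : Tendsto τ atTop atTop) (f : L2) : Tendsto (fun n => P n f) atTop (𝓝 f) := by
  rw [Lp.tendsto_Lp_iff_tendsto_eLpNorm']
  have hP' : ∀ᵐ x, ∀ n, (P n f : ℝ → ℂ) x = chi (τ n) x * (f : ℝ → ℂ) x := ae_all_iff.2 (hP · f)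
  refine tendsto_eLpNorm_of_dominated two_ne_zero ENNReal.ofNat_ne_top
    (fun n => (Lp.aestronglyMeasurable _).sub (Lp.aestronglyMeasurable _)) (Lp.memLp f).norm
    (fun n => ?_) ?_
  · filter_upwards [hP n f] with x hx
    rcases chi_eq_zero_or_one (τ n) x with h | h <;> simp [hx, h]
  · filter_upwards [hP'] with x hx
    refine tendsto_const_nhds.congr' ?_
    filter_upwards [hτ.eventually_gt_atTop |x|] with n hn
    simp [hx, chi_eq_one_of_abs_lt hn]

section Truncation

variable {β : ℕ → ℂ} {P : ℕ → L2op} {τ : ℕ → ℝ}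

theorem tendsto_smul_one_add_mul_apply (hβ : Tendsto β atTop (𝓝 0))
    (hP : ∀ n, IsMulChi (P n) (τ n)) (hτ : Tendsto τ atTop atTop) (A : L2op) (f : L2) :
    Tendsto (fun n => (β n • (1 : L2op) + P n * A) f) atTop (𝓝 (A f)) := by
  simpa using (hβ.smul_const f).add (tendsto_apply_of_isMulChi hP hτ (A f))

theorem tendsto_adjoint_smul_one_add_mul_apply (hβ : Tendsto β atTop (𝓝 0))
    (hP : ∀ n, IsMulChi (P n) (τ n)) (hτ : Tendsto τ atTop atTop) (A : L2op) (f : L2) :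
    Tendsto (fun n => adjoint (β n • (1 : L2op) + P n * A) f) atTop (𝓝 (adjoint A f)) := by
  have hconj : Tendsto (fun n => starRingEnd ℂ (β n)) atTop (𝓝 0) := by
    simpa [Function.comp_def] using (Complex.continuous_conj.tendsto 0).comp hβ
  have h := (hconj.smul_const f).add
    (((adjoint A).continuous.tendsto f).comp (tendsto_apply_of_isMulChi hP hτ f))
  simp only [zero_smul, zero_add] at h
  refine h.congr fun n => ?_
  simp [← star_eq_adjoint, star_mul, star_eq_adjoint (P n), (hP n).adjoint_eq]

end Truncation

section Resolvent

variable {S : L2op} {z w : ℂ}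

theorem res_eq_one_add_smul_fres (hz : z ∈ regularSet S) : res S z = 1 + z • fres S z := by
  have h := Ring.mul_inverse_cancel _ hz
  rw [sub_mul, one_mul, smul_mul_assoc] at h
  rw [fres, ← h, res]
  abel

theorem norm_res_le (hz : z ∈ regularSet S) : ‖res S z‖ ≤ ‖(1 : L2op)‖ + ‖z‖ * ‖fres S z‖ := by
  rw [res_eq_one_add_smul_fres hz]
  exact (norm_add_le _ _).trans (by gcongr; exact norm_smul_le z (fres S z))

theorem norm_adjoint_res_apply_le (hz : z ∈ regularSet S) (v : L2) :
    ‖adjoint (res S z) v‖ ≤ (‖(1 : L2op)‖ + ‖z‖ * ‖fres S z‖) * ‖v‖ := by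
  refine (le_opNorm _ _).trans ?_
  rw [LinearIsometryEquiv.norm_map]
  gcongr
  exact norm_res_le hz

theorem one_sub_smul_eq_mul (hz : z ∈ regularSet S) (w : ℂ) :
    1 - w • S = (1 - (w - z) • fres S z) * (1 - z • S) := by
  have h : res S z * (1 - z • S) = 1 := Ring.inverse_mul_cancel _ hz
  rw [sub_mul, one_mul, smul_mul_assoc, fres, mul_assoc, h, mul_one, sub_smul]
  abel

theorem mem_regularSet_of_norm_sub_mul_le (hz : z ∈ regularSet S)
    (hw : ‖w - z‖ * ‖fres S z‖ ≤ 1 / 2) :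
    w ∈ regularSet S ∧ ‖fres S w‖ ≤ (‖(1 : L2op)‖ + 1) * ‖fres S z‖ := by
  have hsmall : ‖(w - z) • fres S z‖ ≤ 1 / 2 := (norm_smul_le _ _).trans hw
  have hunit : IsUnit (1 - (w - z) • fres S z) :=
    isUnit_one_sub_of_norm_lt_one (hsmall.trans_lt (by norm_num))
  have hfres : fres S w = fres S z * Ring.inverse (1 - (w - z) • fres S z) := by
    rw [fres, res, one_sub_smul_eq_mul hz, Ring.inverse_mul (Or.inr hz), fres, res, mul_assoc]
  refine ⟨show IsUnit _ by rw [one_sub_smul_eq_mul hz]; exact hunit.mul hz, ?_⟩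
  rw [hfres, mul_comm (_ + _)]
  exact (norm_mul_le _ _).trans (by gcongr; exact norm_inverse_one_sub_le hsmall)

end Resolvent

theorem exists_eventually_forall_norm_fres_le {S : ℕ → L2op} {Kc : Set ℂ} (hKc : IsCompact Kc)
    (h : Kc ⊆ nablaB S) :
    ∃ M > 0, ∀ᶠ n in atTop, ∀ z ∈ Kc, z ∈ regularSet (S n) ∧ ‖fres (S n) z‖ ≤ M := by
  refine hKc.induction_on (p := fun U =>
    ∃ M > 0, ∀ᶠ n in atTop, ∀ z ∈ U, z ∈ regularSet (S n) ∧ ‖fres (S n) z‖ ≤ M)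
    ⟨1, one_pos, by simp⟩ ?mono ?union ?nhds
  case mono =>
    rintro U V hUV ⟨M, hM0, hM⟩
    exact ⟨M, hM0, hM.mono fun n hn z hz => hn z (hUV hz)⟩
  case union =>
    rintro U V ⟨M, hM0, hM⟩ ⟨M', -, hM'⟩
    refine ⟨max M M', lt_max_of_lt_left hM0, ?_⟩
    filter_upwards [hM, hM'] with n hn hn' z hz
    rcases hz with hz | hz
    · exact (hn z hz).imp_right (le_max_of_le_left ·)
    · exact (hn' z hz).imp_right (le_max_of_le_right ·)
  case nhds =>
    intro z hz
    obtain ⟨-, M, hM, N, hN⟩ := h hz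
    refine ⟨Metric.ball z (1 / (2 * M)),
      mem_nhdsWithin_of_mem_nhds (Metric.ball_mem_nhds _ (by positivity)), (‖(1 : L2op)‖ + 1) * M,
      by positivity, ?_⟩
    filter_upwards [eventually_gt_atTop N] with n hn w hw
    obtain ⟨hreg, hbound⟩ := hN n hn
    have hwz : ‖w - z‖ * ‖fres (S n) z‖ ≤ 1 / 2 := calc
      ‖w - z‖ * ‖fres (S n) z‖ ≤ 1 / (2 * M) * M := by
        rw [← dist_eq_norm]
        exact mul_le_mul (Metric.mem_ball.1 hw).le hbound (norm_nonneg _) (by positivity)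
      _ = 1 / 2 := by field_simp
    obtain ⟨hw', hbound'⟩ := mem_regularSet_of_norm_sub_mul_le hreg hwz
    exact ⟨hw', hbound'.trans (by gcongr)⟩

theorem mem_regularSet_of_mem_nablaS {S : ℕ → L2op} {T : L2op} {C : ℝ}
    (hST : ∀ f, Tendsto (fun n => S n f) atTop (𝓝 (T f))) (hC : ∀ n, ‖S n‖ ≤ C) {z : ℂ}
    (hz : z ∈ nablaS S) : z ∈ regularSet T := by
  obtain ⟨⟨-, M, -, N, hN⟩, hconv⟩ := hz
  have hreg : ∀ᶠ n in atTop, z ∈ regularSet (S n) ∧ ‖fres (S n) z‖ ≤ M :=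
    eventually_atTop.2 ⟨N + 1, hN⟩
  refine isUnit_of_tendsto_of_tendsto_inverse (C := ‖(1 : L2op)‖ + ‖z‖ * C)
    (M := ‖(1 : L2op)‖ + ‖z‖ * M) (fun f => ?_) (Eventually.of_forall fun n => ?_)
    (hreg.mono fun n hn => hn.1)
    (hreg.mono fun n hn => (norm_res_le hn.1).trans (by gcongr; exact hn.2)) (fun f => ?_)
  · simpa using tendsto_const_nhds.sub ((hST f).const_smul z)
  · refine (norm_sub_le _ _).trans ?_
    gcongr
    exact (norm_smul_le z (S n)).trans (by gcongr; exact hC n)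
  · obtain ⟨g, hg⟩ := hconv f
    refine ⟨f + z • g, (tendsto_const_nhds.add (hg.const_smul z)).congr' ?_⟩
    filter_upwards [hreg] with n hn
    rw [← res, res_eq_one_add_smul_fres hn.1]
    simp

theorem continuousOn_res {T : L2op} {U : Set ℂ} (hU : U ⊆ regularSet T) : ContinuousOn (res T) U :=
  fun z hz => ((NormedRing.inverse_continuousAt (hU hz).unit).comp
    (f := fun z : ℂ => 1 - z • T) (by fun_prop)).continuousWithinAt

theorem tendstoUniformlyOn_adjoint_res {S : ℕ → L2op} {T : L2op} {Kc : Set ℂ} {C : ℝ}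
    (hKc : IsCompact Kc) (hsub : Kc ⊆ nablaS S)
    (hST : ∀ f, Tendsto (fun n => S n f) atTop (𝓝 (T f)))
    (hST' : ∀ f, Tendsto (fun n => adjoint (S n) f) atTop (𝓝 (adjoint T f)))
    (hC : ∀ n, ‖S n‖ ≤ C) (v : L2) :
    TendstoUniformlyOn (fun n z => adjoint (res (S n) z) v) (fun z => adjoint (res T z) v)
      atTop Kc := by
  have hreg : Kc ⊆ regularSet T := fun z hz => mem_regularSet_of_mem_nablaS hST hC (hsub hz)
  set W := (fun z => adjoint (res T z) v) '' Kc
  have hW : IsCompact W := hKc.image_of_continuousOn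
    ((adjoint.continuous.clm_apply continuous_const).comp_continuousOn (continuousOn_res hreg))
  have hSW := tendstoUniformlyOn_of_tendsto_of_norm_le hST'
    (fun n => by rw [LinearIsometryEquiv.norm_map]; exact hC n) hW
  obtain ⟨M, hM0, hM⟩ := exists_eventually_forall_norm_fres_le hKc fun z hz => (hsub hz).1
  obtain ⟨R, hR0, hR⟩ := hKc.isBounded.exists_pos_norm_le
  set D := (‖(1 : L2op)‖ + R * M) * R
  rw [Metric.tendstoUniformlyOn_iff] at hSW ⊢
  intro ε hε
  filter_upwards [hM, hSW (ε / (D + 1)) (by positivity)] with n hn hn' z hz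
  obtain ⟨hregn, hfres⟩ := hn z hz
  set w := adjoint (res T z) v
  have key : adjoint (res (S n) z) v - w
      = adjoint (res (S n) z) (starRingEnd ℂ z • (adjoint (S n) w - adjoint T w)) := by
    have := congrArg (· v) (adjoint_inverse_sub_adjoint_inverse (hreg hz) hregn)
    simp only [sub_sub_sub_cancel_left, ← smul_sub, map_smulₛₗ, map_sub] at this
    simpa [res, w] using this
  have hres : ‖res (S n) z‖ ≤ ‖(1 : L2op)‖ + R * M :=
    (norm_res_le hregn).trans (by gcongr; exact hR z hz)
  have hdiff : ‖adjoint (S n) w - adjoint T w‖ < ε / (D + 1) := by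
    rw [← dist_eq_norm, dist_comm]; exact hn' w ⟨z, hz, rfl⟩
  rw [dist_comm, dist_eq_norm, key]
  calc _ ≤ ‖res (S n) z‖ * (‖z‖ * ‖adjoint (S n) w - adjoint T w‖) := by
        refine (le_opNorm _ _).trans ?_
        rw [LinearIsometryEquiv.norm_map, norm_smul, RCLike.norm_conj]
    _ ≤ (‖(1 : L2op)‖ + R * M) * (R * (ε / (D + 1))) := by
        gcongr
        exact hR z hz
    _ < ε := by
        rw [← mul_assoc, mul_div_assoc', div_lt_iff₀ (by positivity)]
        nlinarith

theorem one_sub_lamn_smul (b : ℕ → ℂ) (n : ℕ) {z : ℂ} (hz : 1 - b n * z ≠ 0) (A : L2op) :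
    1 - lamn b z n • A = (1 - b n * z)⁻¹ • (1 - z • (b n • 1 + A)) := by
  rw [lamn]
  match_scalars <;> field_simp

theorem lamn_mem_regularSet_iff (b : ℕ → ℂ) (n : ℕ) {z : ℂ} (hz : 1 - b n * z ≠ 0) (A : L2op) :
    lamn b z n ∈ regularSet A ↔ z ∈ regularSet (b n • 1 + A) := by
  simp only [regularSet, Set.mem_ofPred_eq, one_sub_lamn_smul b n hz]
  exact isUnit_smul_iff₀ (inv_ne_zero hz) _

theorem res_lamn (b : ℕ → ℂ) (n : ℕ) {z : ℂ} (hz : 1 - b n * z ≠ 0) (A : L2op) :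
    res A (lamn b z n) = (1 - b n * z) • res (b n • 1 + A) z := by
  rw [res, one_sub_lamn_smul b n hz, Ring.inverse_smul (inv_ne_zero hz), inv_inv, res]

theorem statement6_general (T : L2op) (K : ℝ → ℝ → ℂ) (kt : ℝ → L2)
    (tau : ℕ → ℝ) (P : ℕ → L2op) (hiv : ConditionIV K T tau P)
    (b : ℕ → ℂ) (hb : Tendsto b atTop (𝓝 (0 : ℂ)))
    (Kc : Set ℂ) (hKc : IsCompact Kc) (hKcsub : Kc ⊆ nablaS (fun n => b n • (1 : L2op) + P n * T)) (s : ℝ) :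
    (∀ᶠ n in atTop, ∀ lam ∈ Kc, lamn b lam n ∈ regularSet (P n * T)) ∧
    Tendsto (fun n => ⨆ lam ∈ Kc,
        ‖chi (tau n) s • (adjoint (res (P n * T) (lamn b lam n))) (kt s)
          - (adjoint (res T lam)) (kt s)‖)
      atTop (𝓝 (0 : ℝ)) := by
  set S : ℕ → L2op := fun n => b n • (1 : L2op) + P n * T
  have hP : ∀ n, IsMulChi (P n) (tau n) := hiv.proj
  obtain ⟨R, hR0, hR⟩ := hKc.isBounded.exists_pos_norm_le
  obtain ⟨B, hB⟩ := hb.norm.bddAbove_range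
  have hbz := fun ε (hε : 0 < ε) => eventually_forall_norm_mul_lt hb hKc.isBounded hε
  have hne : ∀ᶠ n in atTop, ∀ z ∈ Kc, 1 - b n * z ≠ 0 :=
    (hbz 1 one_pos).mono fun n hn z hz h => by simpa [← sub_eq_zero.1 h] using hn z hz
  obtain ⟨M, -, hM⟩ := exists_eventually_forall_norm_fres_le hKc fun z hz => (hKcsub hz).1
  refine ⟨?_, ?_⟩
  · filter_upwards [hne, hM] with n hn hn' z hz
    exact (lamn_mem_regularSet_iff b n (hn z hz) _).2 (hn' z hz).1
  have hres := tendstoUniformlyOn_adjoint_res (C := B * ‖(1 : L2op)‖ + ‖T‖) hKc hKcsub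
    (tendsto_smul_one_add_mul_apply hb hP hiv.tendsto_top T)
    (tendsto_adjoint_smul_one_add_mul_apply hb hP hiv.tendsto_top T)
    (fun n => ((hP n).norm_smul_one_add_mul_le (b n) T).trans (by gcongr; exact hB ⟨n, rfl⟩))
    (kt s)
  have hscalar : TendstoUniformlyOn (fun n z => starRingEnd ℂ (1 - b n * z)) (fun _ => 1)
      atTop Kc := Metric.tendstoUniformlyOn_iff.2 fun ε hε =>
    (hbz ε hε).mono fun n hn z hz => by simpa [dist_eq_norm] using hn z hz
  have hbound : ∀ᶠ n in atTop, ∀ z ∈ Kc,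
      ‖adjoint (res (S n) z) (kt s)‖ ≤ (‖(1 : L2op)‖ + R * M) * ‖kt s‖ :=
    hM.mono fun n hn z hz => (norm_adjoint_res_apply_le (hn z hz).1 _).trans
      (by gcongr; exacts [hR z hz, (hn z hz).2])
  refine ((hscalar.smul_of_norm_le hres hbound).congr ?_).tendsto_iSup_norm_sub
  filter_upwards [hne, hiv.tendsto_top.eventually_gt_atTop |s|] with n hn hs z hz
  simp [chi_eq_one_of_abs_lt hs, res_lamn b n (hn z hz), S, map_smulₛₗ]

theorem statement6 (T : L2op) (K : ℝ → ℝ → ℂ) (kt kt' : ℝ → L2)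
    (hK : IsK0Kernel K kt kt') (hT : IsInducedBy T K)
    (tau : ℕ → ℝ) (P : ℕ → L2op) (hiv : ConditionIV K T tau P)
    (b : ℕ → ℂ) (hb : Tendsto b atTop (𝓝 (0 : ℂ)))
    (Kc : Set ℂ) (hKc : IsCompact Kc) (hKcsub : Kc ⊆ nablaS (fun n => b n • (1 : L2op) + P n * T)) (s : ℝ) :
    (∀ᶠ n in atTop, ∀ lam ∈ Kc, lamn b lam n ∈ regularSet (P n * T)) ∧
    Tendsto (fun n => ⨆ lam ∈ Kc,
        ‖chi (tau n) s • (adjoint (res (P n * T) (lamn b lam n))) (kt s)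
          - (adjoint (res T lam)) (kt s)‖)
      atTop (𝓝 (0 : ℝ)) :=
  statement6_general T K kt tau P hiv b hb Kc hKc hKcsub s
end
end

section
/- Let T be a bounded linear operator on L² induced by a K⁰-kernel 𝐓 satisfying condition (iv), let {βₙ} be a complex sequence with βₙ → 0, and set λₙ(λ) = λ(1 − βₙλ)⁻¹. Then for each fixed λ ∈ ∇_s({βₙI + T̃ₙ}), sup_{(s,t)∈ℝ²} |𝐓_{n|λₙ(λ)}(s,t) − 𝐓_{|λ}(s,t)| → 0 as n → ∞ (the quantity being defined for all sufficiently large n). -/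
open MeasureTheory Filter Topology ContinuousLinearMap
open scoped ENNReal NNReal

noncomputable section

/-!
Since `Pₙ → I` strongly (dominated convergence), `Sₙ = βₙI + PₙTPₙ → T` strongly. By
Banach–Steinhaus a strongly convergent sequence of operators converges uniformly on compact sets,
so the strong limit of the resolvents `R_λ(Sₙ)` inverts `I - λT`: thus `λ ∈ Π(T)` and
`R_λ(Sₙ) → R_λ(T)` strongly. From `I - λSₙ = (1 - βₙλ)(I - λₙT̃ₙ)` we get
`λₙ R_{λₙ}(T̃ₙ) = λ R_λ(Sₙ)`, and `Pₙ` intertwines `I - λₙT̃ₙ` with `I - λₙTₙ`, so on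
`|s| < τₙ` the difference of the kernels is `λ⟨PₙR_λ(Sₙ)𝐭′(t) - R_λ(T)𝐭′(t), 𝐭(s)⟩`. The range of
`𝐭′` has compact closure, hence this tends to `0` uniformly in `t`. On `|s| ≥ τₙ` the difference
is `-𝐓_{|λ}(s,t)`, which is uniformly small once `|s|` is large.
-/

open Set

section Algebra

theorem isUnit_one_sub_mul_comm {R : Type*} [Ring R] {a b : R} (h : IsUnit (1 - a * b)) :
    IsUnit (1 - b * a) := by
  obtain ⟨u, hu⟩ := h
  refine ⟨⟨1 - b * a, 1 + b * ↑u⁻¹ * a, ?_, ?_⟩, rfl⟩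
  · calc (1 - b * a) * (1 + b * ↑u⁻¹ * a) = 1 - b * a + b * ((1 - a * b) * ↑u⁻¹) * a := by
          noncomm_ring
      _ = 1 := by rw [← hu, Units.mul_inv, mul_one, sub_add_cancel]
  · calc (1 + b * ↑u⁻¹ * a) * (1 - b * a) = 1 - b * a + b * (↑u⁻¹ * (1 - a * b)) * a := by
          noncomm_ring
      _ = 1 := by rw [← hu, Units.inv_mul, mul_one, sub_add_cancel]

theorem Ring.inverse_eq_of_mul_eq_one {M₀ : Type*} [MonoidWithZero M₀] {x y : M₀}
    (hxy : x * y = 1) (hyx : y * x = 1) : Ring.inverse x = y :=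
  Ring.inverse_unit ⟨x, y, hxy, hyx⟩

theorem Ring.inverse_mul_eq_mul_inverse {M₀ : Type*} [MonoidWithZero M₀] {p x y : M₀}
    (hx : IsUnit x) (hy : IsUnit y) (h : p * x = y * p) :
    Ring.inverse y * p = p * Ring.inverse x :=
  calc Ring.inverse y * p = Ring.inverse y * (p * x) * Ring.inverse x := by
        rw [mul_assoc, mul_assoc, Ring.mul_inverse_cancel x hx, mul_one]
    _ = p * Ring.inverse x := by
        rw [h, ← mul_assoc, Ring.inverse_mul_cancel y hy, one_mul]

variable {𝕜 A : Type*} [Field 𝕜] [Ring A] [Algebra 𝕜 A]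

theorem Ring.inverse_one_sub_smul_eq {c : 𝕜} {a : A} (h : IsUnit (1 - c • a)) :
    Ring.inverse (1 - c • a) = 1 + c • (a * Ring.inverse (1 - c • a)) := by
  have := Ring.mul_inverse_cancel _ h
  rw [sub_mul, one_mul, smul_mul_assoc] at this
  exact eq_add_of_sub_eq this

/-- `1 - c • (b • 1 + p x p) = (1 - b c) • (1 - μ • p x p)`, and `p` intertwines
`1 - μ • p x p` with `1 - μ • p x`. -/
theorem isUnit_one_sub_smul_mul_and_inverse {p x : A} (hp : p * p = p) {b c μ : 𝕜}
    (hbc : 1 - b * c ≠ 0) (hμ : μ * (1 - b * c) = c)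
    (h : IsUnit (1 - c • (b • 1 + p * x * p))) :
    IsUnit (1 - μ • (p * x)) ∧
      μ • (Ring.inverse (1 - μ • (p * x)) * p)
        = c • (p * Ring.inverse (1 - c • (b • 1 + p * x * p))) := by
  set Y : A := 1 - μ • (p * x * p)
  have hfac : 1 - c • (b • 1 + p * x * p) = (1 - b * c) • Y := by
    rw [smul_sub, smul_smul, mul_comm (1 - b * c), hμ, sub_smul, one_smul, smul_add, smul_smul,
      mul_comm c b]
    abel
  have hY : IsUnit Y := by
    rw [hfac] at h
    simpa using (isUnit_smul_iff (Units.mk0 _ hbc) Y).mp h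
  have hpx : IsUnit (1 - μ • (p * x)) := by
    have := isUnit_one_sub_mul_comm (a := μ • (p * x)) (b := p) (by rwa [smul_mul_assoc])
    rwa [mul_smul_comm, ← mul_assoc, hp] at this
  have hinter : p * Y = (1 - μ • (p * x)) * p := by
    simp only [Y, mul_sub, sub_mul, mul_one, one_mul, mul_smul_comm, smul_mul_assoc, ← mul_assoc,
      hp]
  have hinv : Ring.inverse (1 - c • (b • 1 + p * x * p)) = (1 - b * c)⁻¹ • Ring.inverse Y := by
    rw [hfac]
    apply Ring.inverse_eq_of_mul_eq_one
    · rw [smul_mul_smul_comm, mul_inv_cancel₀ hbc, Ring.mul_inverse_cancel _ hY, one_smul]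
    · rw [smul_mul_smul_comm, inv_mul_cancel₀ hbc, Ring.inverse_mul_cancel _ hY, one_smul]
  refine ⟨hpx, ?_⟩
  rw [Ring.inverse_mul_eq_mul_inverse hY hpx hinter, hinv, mul_smul_comm, smul_smul,
    ← div_eq_mul_inv, (div_eq_iff hbc).mpr hμ.symm]

end Algebra

namespace ContinuousLinearMap

variable {𝕜 E F : Type*} [NontriviallyNormedField 𝕜] [NormedAddCommGroup E] [NormedSpace 𝕜 E]
  [CompleteSpace E] [NormedAddCommGroup F] [NormedSpace 𝕜 F]

theorem tendstoUniformlyOn_of_tendsto_apply {A : ℕ → E →L[𝕜] F} {B : E →L[𝕜] F}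
    (h : ∀ x, Tendsto (fun n => A n x) atTop (𝓝 (B x))) {K : Set E} (hK : IsCompact K) :
    TendstoUniformlyOn (fun n x => A n x) B atTop K := by
  have : CompactSpace K := isCompact_iff_compactSpace.mp hK
  -- Banach–Steinhaus: a pointwise convergent sequence of operators is equicontinuous.
  have hequi : Equicontinuous fun n => (A n : E → F) :=
    (PolynormableSpace.banach_steinhaus fun x => (h x).isVonNBounded_range 𝕜).equicontinuous
  have hequiK := (equicontinuous_restrict_iff _).mpr (hequi.equicontinuousOn K)
  rw [tendstoUniformlyOn_iff_tendstoUniformly_comp_coe]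
  exact UniformFun.tendsto_iff_tendstoUniformly.mp
    ((hequiK.tendsto_uniformFun_iff_pi _ _).mpr (tendsto_pi_nhds.mpr fun x => h x))

theorem tendsto_apply_of_tendsto_apply {A : ℕ → E →L[𝕜] F} {B : E →L[𝕜] F}
    (h : ∀ x, Tendsto (fun n => A n x) atTop (𝓝 (B x))) {u : ℕ → E} {x : E}
    (hu : Tendsto u atTop (𝓝 x)) : Tendsto (fun n => A n (u n)) atTop (𝓝 (B x)) :=
  (tendstoUniformlyOn_of_tendsto_apply h hu.isCompact_insert_range).tendsto_comp
    B.continuous.continuousWithinAt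
    (tendsto_nhdsWithin_iff.mpr ⟨hu, .of_forall fun n => mem_insert_of_mem _ (mem_range_self n)⟩)

theorem tendstoUniformly_comp_of_tendsto_apply {A : ℕ → E →L[𝕜] F} {B : E →L[𝕜] F}
    (h : ∀ x, Tendsto (fun n => A n x) atTop (𝓝 (B x))) {X : Type*} [TopologicalSpace X]
    {k : X → E} {y : E} (hk : Continuous k) (hky : Tendsto k (cocompact X) (𝓝 y)) :
    TendstoUniformly (fun n t => A n (k t)) (fun t => B (k t)) atTop := by
  have := (tendstoUniformlyOn_of_tendsto_apply h
    (hky.isCompact_insert_range_of_cocompact hk)).comp k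
  rwa [preimage_eq_univ_iff.mpr (range_subset_iff.mpr fun t =>
    mem_insert_of_mem _ (mem_range_self t)), tendstoUniformlyOn_univ] at this

theorem isUnit_and_tendsto_inverse_apply {X : ℕ → E →L[𝕜] E} {X₀ : E →L[𝕜] E}
    (hX : ∀ x, Tendsto (fun n => X n x) atTop (𝓝 (X₀ x))) (hunit : ∀ᶠ n in atTop, IsUnit (X n))
    (hinv : ∀ x, ∃ y, Tendsto (fun n => Ring.inverse (X n) x) atTop (𝓝 y)) :
    IsUnit X₀ ∧ ∀ x, Tendsto (fun n => Ring.inverse (X n) x) atTop (𝓝 (Ring.inverse X₀ x)) := by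
  choose g hg using hinv
  let R : E →L[𝕜] E :=
    continuousLinearMapOfTendsto (fun n => Ring.inverse (X n)) (tendsto_pi_nhds.mpr hg)
  have hR : ∀ x, Tendsto (fun n => Ring.inverse (X n) x) atTop (𝓝 (R x)) := hg
  have hright : X₀ * R = 1 := by
    ext x
    refine tendsto_nhds_unique (tendsto_apply_of_tendsto_apply hX (hR x))
      (tendsto_const_nhds.congr' ?_)
    filter_upwards [hunit] with n hn
    rw [← mul_apply_eq_comp, Ring.mul_inverse_cancel _ hn, one_apply_eq_self]
  have hleft : R * X₀ = 1 := by
    ext x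
    refine tendsto_nhds_unique (tendsto_apply_of_tendsto_apply hR (hX x))
      (tendsto_const_nhds.congr' ?_)
    filter_upwards [hunit] with n hn
    rw [← mul_apply_eq_comp, Ring.inverse_mul_cancel _ hn, one_apply_eq_self]
  exact ⟨⟨⟨X₀, R, hright, hleft⟩, rfl⟩, Ring.inverse_eq_of_mul_eq_one hright hleft ▸ hR⟩

end ContinuousLinearMap

theorem MeasureTheory.tendsto_eLpNorm_zero_of_dominated {α E : Type*} [MeasurableSpace α]
    {μ : Measure α} [NormedAddCommGroup E] {p : ℝ≥0∞} (hp0 : p ≠ 0) (hp : p ≠ ∞)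
    {f : α → ℝ} (hf : MemLp f p μ) {g : ℕ → α → E} (hg : ∀ n, AEStronglyMeasurable (g n) μ)
    (hbound : ∀ n, ∀ᵐ x ∂μ, ‖g n x‖ ≤ f x)
    (hlim : ∀ᵐ x ∂μ, Tendsto (fun n => g n x) atTop (𝓝 0)) :
    Tendsto (fun n => eLpNorm (g n) p μ) atTop (𝓝 0) := by
  have hp' : 0 < p.toReal := ENNReal.toReal_pos hp0 hp
  have hint : Tendsto (fun n => ∫⁻ x, ‖g n x‖ₑ ^ p.toReal ∂μ) atTop (𝓝 0) := by
    have := tendsto_lintegral_of_dominated_convergence' (f := fun _ => 0)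
      (F := fun n x => ‖g n x‖ₑ ^ p.toReal) (fun x => ‖f x‖ₑ ^ p.toReal)
      (fun n => ((hg n).enorm.pow_const _)) (fun n => ?_)
      (lintegral_rpow_enorm_lt_top_of_eLpNorm_lt_top hp0 hp hf.2).ne ?_
    · simpa [ENNReal.zero_rpow_of_pos hp'] using this
    · filter_upwards [hbound n] with x hx
      gcongr
      exact enorm_le_iff_norm_le.mpr (hx.trans (Real.le_norm_self _))
    · filter_upwards [hlim] with x hx
      have := (ENNReal.continuous_rpow_const (y := p.toReal)).tendsto _ |>.comp
        (continuous_enorm.tendsto _ |>.comp hx)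
      simpa [Function.comp_def, ENNReal.zero_rpow_of_pos hp'] using this
  have := ((ENNReal.continuous_rpow_const (y := 1 / p.toReal)).tendsto _).comp hint
  simp only [Function.comp_def, ENNReal.zero_rpow_of_pos (one_div_pos.mpr hp')] at this
  simpa [eLpNorm_eq_lintegral_rpow_enorm_toReal hp0 hp] using this

theorem chi_eq_ite (τ x : ℝ) : chi τ x = if |x| < τ then 1 else 0 := by
  simp only [chi, Set.indicator_apply, Set.mem_Ioo, Pi.one_apply, ← abs_lt]

theorem chi_mul_self (τ x : ℝ) : chi τ x * chi τ x = chi τ x := by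
  rw [chi_eq_ite]; split <;> simp

theorem measurable_chi (τ : ℝ) : Measurable (chi τ) :=
  measurable_const.indicator measurableSet_Ioo

theorem norm_chi_sub_one_le (τ x : ℝ) : ‖chi τ x - 1‖ ≤ 1 := by
  rw [chi_eq_ite]; split <;> simp

theorem mul_self_of_ae_eq_chi_mul {τ : ℝ} {P : L2op}
    (hP : ∀ f : L2, (P f : ℝ → ℂ) =ᵐ[volume] fun x => chi τ x * (f : ℝ → ℂ) x) :
    P * P = P := by
  ext f : 1
  refine Lp.ext ?_
  filter_upwards [hP (P f), hP f] with x h1 h2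
  rw [mul_apply_eq_comp, h1, h2, ← mul_assoc, chi_mul_self]

theorem tendsto_apply_of_ae_eq_chi_mul {τ : ℕ → ℝ} (hτ : Tendsto τ atTop atTop) {P : ℕ → L2op}
    (hP : ∀ n, ∀ f : L2, (P n f : ℝ → ℂ) =ᵐ[volume] fun x => chi (τ n) x * (f : ℝ → ℂ) x)
    (f : L2) : Tendsto (fun n => P n f) atTop (𝓝 f) := by
  have hdiff : ∀ n, (P n f - f : L2) =ᵐ[volume] fun x => (chi (τ n) x - 1) * (f : ℝ → ℂ) x := by
    intro n
    filter_upwards [Lp.coeFn_sub (P n f) f, hP n f] with x h1 h2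
    rw [h1, Pi.sub_apply, h2, sub_mul, one_mul]
  have hlim : Tendsto (fun n => eLpNorm (fun x => (chi (τ n) x - 1) * (f : ℝ → ℂ) x) 2 volume)
      atTop (𝓝 0) := by
    refine tendsto_eLpNorm_zero_of_dominated two_ne_zero ENNReal.ofNat_ne_top (Lp.memLp f).norm
      (fun n => ((measurable_chi _).sub measurable_const).aestronglyMeasurable.mul
        (Lp.aestronglyMeasurable f))
      (fun n => .of_forall fun x => ?_) (.of_forall fun x => ?_)
    · rw [norm_mul]
      exact mul_le_of_le_one_left (norm_nonneg _) (norm_chi_sub_one_le _ _)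
    · refine tendsto_const_nhds.congr' ?_
      filter_upwards [hτ.eventually_gt_atTop |x|] with n hn
      rw [chi_eq_ite, if_pos hn, sub_self, zero_mul]
  rw [tendsto_iff_norm_sub_tendsto_zero]
  refine ((ENNReal.tendsto_toReal ENNReal.zero_ne_top).comp hlim).congr fun n => ?_
  rw [Function.comp_apply, Lp.norm_def, eLpNorm_congr_ae (hdiff n)]

theorem tendsto_iSup_of_forall_eventually_le {ι α : Type*} {l : Filter ι} {g : ι → α → ℝ}
    (hg : ∀ i a, 0 ≤ g i a) (h : ∀ ε > 0, ∀ᶠ i in l, ∀ a, g i a ≤ ε) :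
    Tendsto (fun i => ⨆ a, g i a) l (𝓝 0) := by
  rw [Metric.tendsto_nhds]
  intro ε hε
  filter_upwards [h (ε / 2) (half_pos hε)] with i hi
  rw [Real.dist_0_eq_abs, abs_of_nonneg (Real.iSup_nonneg (hg i))]
  exact (Real.iSup_le hi (half_pos hε).le).trans_lt (half_lt_self hε)

theorem Filter.Tendsto.exists_forall_norm_le_of_le_norm {E F : Type*} [NormedAddCommGroup E]
    [ProperSpace E] [SeminormedAddCommGroup F] {k : E → F} (hk : Tendsto k (cocompact E) (𝓝 0))
    {ε : ℝ} (hε : 0 < ε) : ∃ r, ∀ x, r ≤ ‖x‖ → ‖k x‖ ≤ ε := by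
  rw [← Metric.cobounded_eq_cocompact, ← comap_norm_atTop] at hk
  have := eventually_comap.mp (hk.eventually (eventually_norm_sub_lt 0 hε))
  obtain ⟨r, hr⟩ := eventually_atTop.mp this
  exact ⟨r, fun x hx => by simpa using (hr ‖x‖ hx x rfl).le⟩

theorem Continuous.exists_forall_norm_le_of_tendsto_cocompact {X E : Type*} [TopologicalSpace X]
    [SeminormedAddCommGroup E] {k : X → E} (hk : Continuous k) {y : E}
    (hky : Tendsto k (cocompact X) (𝓝 y)) : ∃ C, ∀ x, ‖k x‖ ≤ C :=
  (isBounded_iff_forall_norm_le.mp ((hky.isCompact_insert_range_of_cocompact hk).isBounded.subset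
    (subset_insert _ _))).imp fun _ hC x => hC _ (mem_range_self x)

theorem IsK0Kernel.exists_forall_norm_resKer_le {K : ℝ → ℝ → ℂ} {kt kt' : ℝ → L2}
    (hK : IsK0Kernel K kt kt') (T : L2op) (lam : ℂ) {ε : ℝ} (hε : 0 < ε) :
    ∃ r, ∀ s t, r ≤ |s| → ‖resKer T K kt kt' lam s t‖ ≤ ε := by
  obtain ⟨C, hC⟩ := hK.cont_t'.exists_forall_norm_le_of_tendsto_cocompact hK.vanish_t'
  set A := ‖lam‖ * (‖res T lam‖ * C)
  have hA : 0 ≤ A := by have := (norm_nonneg _).trans (hC 0); positivity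
  obtain ⟨r₁, hr₁⟩ :=
    hK.vanish_t.exists_forall_norm_le_of_le_norm (by positivity : 0 < ε / (2 * (A + 1)))
  obtain ⟨r₂, hr₂⟩ := hK.vanish.exists_forall_norm_le_of_le_norm (half_pos hε)
  refine ⟨max r₁ r₂, fun s t hs => ?_⟩
  have hkt : ‖kt s‖ ≤ ε / (2 * (A + 1)) := hr₁ s (le_of_max_le_left hs)
  have hKst : ‖K s t‖ ≤ ε / 2 := hr₂ (s, t) ((le_of_max_le_right hs).trans (norm_fst_le (s, t)))
  have hres : ‖res T lam (kt' t)‖ ≤ ‖res T lam‖ * C :=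
    (res T lam).le_opNorm_of_le (hC t)
  calc ‖resKer T K kt kt' lam s t‖
      ≤ ‖lam‖ * (‖kt s‖ * ‖res T lam (kt' t)‖) + ‖K s t‖ := by
        refine (norm_add_le _ _).trans ?_
        rw [norm_mul]
        gcongr
        exact norm_inner_le_norm _ _
    _ ≤ A * ‖kt s‖ + ‖K s t‖ := by
        rw [mul_comm ‖kt s‖, ← mul_assoc]
        gcongr
        exact mul_le_mul_of_nonneg_left hres (norm_nonneg _)
    _ ≤ A * (ε / (2 * (A + 1))) + ε / 2 := by gcongr
    _ ≤ ε / 2 + ε / 2 := by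
        gcongr
        rw [mul_div_assoc', div_le_div_iff₀ (by positivity) two_pos]
        nlinarith
    _ = ε := add_halves ε

theorem resKerN_sub_resKer {T : L2op} {K : ℝ → ℝ → ℂ} {kt kt' : ℝ → L2} {τ : ℝ} {P R : L2op}
    {μ lam : ℂ} (h : μ • (res (P * T) μ * P) = lam • (P * R)) (s t : ℝ) :
    resKerN T K kt kt' τ P μ s t - resKer T K kt kt' lam s t
      = lam * chi τ s * (inner ℂ (kt s) (P (R (kt' t)) - res T lam (kt' t)) : ℂ)
        + (chi τ s - 1) * resKer T K kt kt' lam s t := by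
  have happ : μ • res (P * T) μ (P (kt' t)) = lam • P (R (kt' t)) := DFunLike.congr_fun h (kt' t)
  have hinner : μ * (inner ℂ (kt s) (res (P * T) μ (P (kt' t))) : ℂ)
      = lam * (inner ℂ (kt s) (P (R (kt' t))) : ℂ) := by
    rw [← inner_smul_right, happ, inner_smul_right]
  simp only [resKerN, resKer, inner_sub_right]
  linear_combination chi τ s * hinner

theorem tendsto_iSup_norm_resKerN_sub_resKer {T : L2op} {K : ℝ → ℝ → ℂ} {kt kt' : ℝ → L2}
    (hK : IsK0Kernel K kt kt') {τ : ℕ → ℝ} (hτ : Tendsto τ atTop atTop) {P R : ℕ → L2op}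
    {μ : ℕ → ℂ} {lam : ℂ}
    (hres : ∀ᶠ n in atTop, μ n • (res (P n * T) (μ n) * P n) = lam • (P n * R n))
    (hunif : TendstoUniformly (fun n t => P n (R n (kt' t))) (fun t => res T lam (kt' t)) atTop) :
    Tendsto (fun n => ⨆ p : ℝ × ℝ,
        ‖resKerN T K kt kt' (τ n) (P n) (μ n) p.1 p.2 - resKer T K kt kt' lam p.1 p.2‖)
      atTop (𝓝 0) := by
  refine tendsto_iSup_of_forall_eventually_le (fun _ _ => norm_nonneg _) fun ε hε => ?_
  obtain ⟨C, hC⟩ := hK.cont_t.exists_forall_norm_le_of_tendsto_cocompact hK.vanish_t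
  have hB : 0 < ‖lam‖ * C + 1 := by have := (norm_nonneg _).trans (hC 0); positivity
  obtain ⟨r, hr⟩ := hK.exists_forall_norm_resKer_le T lam hε
  filter_upwards [hres, Metric.tendstoUniformly_iff.mp hunif _ (div_pos hε hB),
    hτ.eventually_ge_atTop r] with n hn hclose hτn
  rintro ⟨s, t⟩
  rw [resKerN_sub_resKer hn, chi_eq_ite]
  split_ifs with hs
  · have hv := (hclose t).le
    rw [dist_comm, dist_eq_norm] at hv
    calc ‖lam * 1 * (inner ℂ (kt s) (P n (R n (kt' t)) - res T lam (kt' t)) : ℂ)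
          + (1 - 1) * resKer T K kt kt' lam s t‖
        ≤ ‖lam‖ * (‖kt s‖ * ‖P n (R n (kt' t)) - res T lam (kt' t)‖) := by
          rw [sub_self, zero_mul, add_zero, mul_one, norm_mul]
          gcongr
          exact norm_inner_le_norm _ _
      _ ≤ ‖lam‖ * (C * (ε / (‖lam‖ * C + 1))) := by
          gcongr
          exacts [(norm_nonneg _).trans (hC 0), hC s]
      _ ≤ ε := by
          rw [← mul_assoc, mul_div_assoc', div_le_iff₀ hB]
          nlinarith
  · simpa using hr s t (hτn.trans (not_lt.mp hs))

theorem statement7_general (T : L2op) (K : ℝ → ℝ → ℂ) (kt kt' : ℝ → L2)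
    (hK : IsK0Kernel K kt kt')
    (tau : ℕ → ℝ) (P : ℕ → L2op) (hiv : ConditionIV K T tau P)
    (b : ℕ → ℂ) (hb : Tendsto b atTop (𝓝 (0 : ℂ)))
    (lam : ℂ) (hlam : lam ∈ nablaS (fun n => b n • (1 : L2op) + P n * T * P n)) :
    (∀ᶠ n in atTop, lamn b lam n ∈ regularSet (P n * T)) ∧
    Tendsto (fun n => ⨆ p : ℝ × ℝ,
        ‖resKerN T K kt kt' (tau n) (P n) (lamn b lam n) p.1 p.2
          - resKer T K kt kt' lam p.1 p.2‖)
      atTop (𝓝 (0 : ℝ)) := by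
  set S : ℕ → L2op := fun n => b n • (1 : L2op) + P n * T * P n
  obtain ⟨⟨_, _, _, N, hN⟩, hfres⟩ := hlam
  have hreg : ∀ᶠ n in atTop, IsUnit (1 - lam • S n) :=
    eventually_atTop.mpr ⟨N + 1, fun n hn => (hN n hn).1⟩
  have hP : ∀ f, Tendsto (fun n => P n f) atTop (𝓝 ((1 : L2op) f)) :=
    tendsto_apply_of_ae_eq_chi_mul hiv.tendsto_top hiv.proj
  have hS : ∀ f, Tendsto (fun n => (1 - lam • S n) f) atTop (𝓝 ((1 - lam • T) f)) := by
    intro f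
    have hPTP := tendsto_apply_of_tendsto_apply hP ((T.continuous.tendsto f).comp (hP f))
    simpa [S] using tendsto_const_nhds.sub (((hb.smul_const f).add hPTP).const_smul lam)
  have hres : ∀ f, ∃ g, Tendsto (fun n => res (S n) lam f) atTop (𝓝 g) := by
    intro f
    obtain ⟨g, hg⟩ := hfres f
    refine ⟨f + lam • g, ((hg.const_smul lam).const_add f).congr' ?_⟩
    filter_upwards [hreg] with n hn
    rw [res, Ring.inverse_one_sub_smul_eq hn]
    rfl
  obtain ⟨-, hresT⟩ := isUnit_and_tendsto_inverse_apply hS hreg hres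
  have hshift : ∀ᶠ n in atTop, IsUnit (1 - lamn b lam n • (P n * T)) ∧
      lamn b lam n • (res (P n * T) (lamn b lam n) * P n) = lam • (P n * res (S n) lam) := by
    have hbc : ∀ᶠ n in atTop, 1 - b n * lam ≠ 0 :=
      ((hb.mul_const lam).const_sub 1).eventually_ne (by simp)
    filter_upwards [hreg, hbc] with n hn hbcn
    exact isUnit_one_sub_smul_mul_and_inverse (mul_self_of_ae_eq_chi_mul (hiv.proj n)) hbcn
      (by rw [lamn, mul_assoc, inv_mul_cancel₀ hbcn, mul_one]) hn
  have hPR : ∀ f, Tendsto (fun n => (P n * res (S n) lam) f) atTop (𝓝 (res T lam f)) :=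
    fun f => tendsto_apply_of_tendsto_apply hP (hresT f)
  exact ⟨hshift.mono fun _ h => h.1,
    tendsto_iSup_norm_resKerN_sub_resKer hK hiv.tendsto_top (hshift.mono fun _ h => h.2)
      (tendstoUniformly_comp_of_tendsto_apply hPR hK.cont_t' hK.vanish_t')⟩

theorem statement7 (T : L2op) (K : ℝ → ℝ → ℂ) (kt kt' : ℝ → L2)
    (hK : IsK0Kernel K kt kt') (hT : IsInducedBy T K)
    (tau : ℕ → ℝ) (P : ℕ → L2op) (hiv : ConditionIV K T tau P)
    (b : ℕ → ℂ) (hb : Tendsto b atTop (𝓝 (0 : ℂ)))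
    (lam : ℂ) (hlam : lam ∈ nablaS (fun n => b n • (1 : L2op) + P n * T * P n)) :
    (∀ᶠ n in atTop, lamn b lam n ∈ regularSet (P n * T)) ∧
    Tendsto (fun n => ⨆ p : ℝ × ℝ,
        ‖resKerN T K kt kt' (tau n) (P n) (lamn b lam n) p.1 p.2
          - resKer T K kt kt' lam p.1 p.2‖)
      atTop (𝓝 (0 : ℝ)) :=
  statement7_general T K kt kt' hK tau P hiv b hb lam hlam
end
end

section
/- Let T be a bounded linear operator on L² induced by a K⁰-kernel 𝐓 satisfying condition (iv), with subkernel operators Tₙ = PₙT, and suppose that ‖(T − Tₙ)Tₙᵐ‖ → 0 as n → ∞ for some m ∈ ℕ. If λ is a nonzero regular value for T, then λ is not the limit of any sequence {ξₙ} with ξₙ ∈ Λ(Tₙ) for each n. -/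
open MeasureTheory Filter Topology ContinuousLinearMap
open scoped ENNReal NNReal

noncomputable section

/-!
Each `Tₙ` is nuclear, hence compact, so by the Fredholm alternative `ξₙ ∈ Λ(Tₙ)` yields
`fₙ ≠ 0` with `ξₙ Tₙ fₙ = fₙ`. Then `fₙ = ξₙᵐ Tₙᵐ fₙ`, so `(T - Tₙ) fₙ = ξₙᵐ (T - Tₙ) Tₙᵐ fₙ`
is `o(‖fₙ‖)`, and so is `(I - λT) fₙ = (ξₙ - λ) T fₙ - ξₙ (T - Tₙ) fₙ` if `ξₙ → λ`.
This is impossible when `I - λT` is invertible, hence bounded below.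
-/

section RankOne

variable {E : Type*} [NormedAddCommGroup E] [InnerProductSpace ℂ E]

/-- `f ↦ ⟪f, g⟫ • h`, which is conjugate-linear over `ℂ` and therefore set up over `ℝ`. -/
def innerSMulRight (g h : E) : E →L[ℝ] E :=
  ((Complex.conjCLE : ℂ →L[ℝ] ℂ).comp ((innerSL ℂ g).restrictScalars ℝ)).smulRight h

@[simp]
lemma innerSMulRight_apply (g h f : E) : innerSMulRight g h f = inner ℂ f g • h := by
  simp [innerSMulRight]

lemma norm_innerSMulRight_le (g h : E) : ‖innerSMulRight g h‖ ≤ ‖g‖ * ‖h‖ := by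
  refine ContinuousLinearMap.opNorm_le_bound _ (by positivity) fun f => ?_
  rw [innerSMulRight_apply, norm_smul]
  calc ‖inner ℂ f g‖ * ‖h‖ ≤ ‖f‖ * ‖g‖ * ‖h‖ := by gcongr; exact norm_inner_le_norm f g
    _ = ‖g‖ * ‖h‖ * ‖f‖ := by ring

lemma isCompactOperator_innerSMulRight (g h : E) : IsCompactOperator (innerSMulRight g h) :=
  (isCompactOperator_of_locallyCompactSpace_dom
    ((Complex.conjCLE : ℂ →L[ℝ] ℂ).comp ((innerSL ℂ g).restrictScalars ℝ))).continuous_comp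
    (continuous_id.smul continuous_const)

lemma isCompactOperator_of_eq_tsum_inner_smul [CompleteSpace E] {A : E → E} {g h : ℕ → E}
    (hsum : Summable fun k => ‖g k‖ * ‖h k‖) (hA : ∀ f, A f = ∑' k, inner ℂ f (g k) • h k) :
    IsCompactOperator A := by
  obtain ⟨S, hS⟩ := Summable.of_norm_bounded (f := fun k => innerSMulRight (g k) (h k)) hsum
    fun k => norm_innerSMulRight_le (g k) (h k)
  have hAS : A = S := by
    funext f
    have hSf : HasSum (fun k => innerSMulRight (g k) (h k) f) (S f) :=
      hS.map (ContinuousLinearMap.apply ℝ E f) (ContinuousLinearMap.continuous _)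
    rw [hA f, ← hSf.tsum_eq]
    exact tsum_congr fun k => (innerSMulRight_apply (g k) (h k) f).symm
  rw [hAS]
  exact isCompactOperator_of_tendsto hS.tendsto_sum_nat
    (Eventually.of_forall fun N => (compactOperator (RingHom.id ℝ) E E).sum_mem
      fun k _ => isCompactOperator_innerSMulRight (g k) (h k))

end RankOne

theorem IsNuclear.isCompactOperator {A : L2op} (hA : IsNuclear A) : IsCompactOperator A :=
  let ⟨_, _, hsum, hrep⟩ := hA
  isCompactOperator_of_eq_tsum_inner_smul hsum hrep

section FixedVector

variable {𝕜 X : Type*} [NontriviallyNormedField 𝕜] [NormedAddCommGroup X] [NormedSpace 𝕜 X]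

lemma IsCompactOperator.exists_ne_zero_apply_eq_self [CompleteSpace X] {C : X →L[𝕜] X}
    (hC : IsCompactOperator C) (h : ¬IsUnit (1 - C)) : ∃ f, f ≠ 0 ∧ C f = f := by
  rcases hC.hasEigenvalue_or_mem_resolventSet one_ne_zero with hev | hres
  · obtain ⟨f, hf⟩ := hev.exists_hasEigenvector
    exact ⟨f, hf.2, by simpa using Module.End.mem_eigenspace_iff.mp hf.1⟩
  · exact absurd (by simpa [spectrum.mem_resolventSet_iff] using hres) h

lemma norm_one_sub_smul_apply_le_of_smul_apply_eq_self {T S : X →L[𝕜] X} {ξ lam : 𝕜} {f : X}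
    (hf : ξ • S f = f) (m : ℕ) :
    ‖(1 - lam • T) f‖ ≤ (‖ξ‖ ^ (m + 1) * ‖(T - S) * S ^ m‖ + ‖ξ - lam‖ * ‖T‖) * ‖f‖ := by
  have hpow : ∀ j : ℕ, ξ ^ j • (S ^ j) f = f := by
    intro j
    induction j with
    | zero => simp
    | succ j ih =>
      rw [pow_succ, mul_smul]
      change ξ ^ j • ξ • (S ^ j) (S f) = f
      rw [← map_smul, hf, ih]
  have hdecomp : (1 - lam • T) f = (ξ - lam) • T f - ξ • (T - S) f := by
    simp only [sub_apply, smul_apply, one_apply_eq_self, sub_smul, smul_sub, hf]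
    abel
  have hdefect : (T - S) f = ξ ^ m • ((T - S) * S ^ m) f := by
    change _ = ξ ^ m • (T - S) ((S ^ m) f)
    rw [← map_smul, hpow]
  calc ‖(1 - lam • T) f‖
      ≤ ‖ξ - lam‖ * (‖T‖ * ‖f‖) + ‖ξ‖ * (‖ξ‖ ^ m * (‖(T - S) * S ^ m‖ * ‖f‖)) := by
        rw [hdecomp, hdefect]
        refine (norm_sub_le _ _).trans (add_le_add ?_ ?_) <;> rw [norm_smul]
        · gcongr; exact T.le_opNorm f
        · rw [norm_smul, norm_pow]; gcongr; exact ContinuousLinearMap.le_opNorm _ f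
    _ = (‖ξ‖ ^ (m + 1) * ‖(T - S) * S ^ m‖ + ‖ξ - lam‖ * ‖T‖) * ‖f‖ := by ring

lemma eventually_eq_zero_of_smul_apply_eq_self {T : X →L[𝕜] X} {S : ℕ → X →L[𝕜] X}
    {ξ : ℕ → 𝕜} {lam : 𝕜} {m : ℕ} (hT : IsUnit (1 - lam • T)) (hξ : Tendsto ξ atTop (𝓝 lam))
    (hS : Tendsto (fun n => ‖(T - S n) * S n ^ m‖) atTop (𝓝 0)) :
    ∀ᶠ n in atTop, ∀ f, ξ n • S n f = f → f = 0 := by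
  obtain ⟨u, hu⟩ := hT
  have hbelow (f : X) : ‖f‖ ≤ ‖(↑u⁻¹ : X →L[𝕜] X)‖ * ‖(1 - lam • T) f‖ := by
    calc ‖f‖ = ‖(↑u⁻¹ * ↑u : X →L[𝕜] X) f‖ := by rw [u.inv_mul, one_apply_eq_self]
      _ ≤ _ := by rw [← hu]; exact (↑u⁻¹ : X →L[𝕜] X).le_opNorm (u.val f)
  have hε : Tendsto (fun n => ‖(↑u⁻¹ : X →L[𝕜] X)‖ *
      (‖ξ n‖ ^ (m + 1) * ‖(T - S n) * S n ^ m‖ + ‖ξ n - lam‖ * ‖T‖)) atTop (𝓝 0) := by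
    simpa using (((hξ.norm.pow (m + 1)).mul hS).add
      ((hξ.sub_const lam).norm.mul_const ‖T‖)).const_mul ‖(↑u⁻¹ : X →L[𝕜] X)‖
  filter_upwards [hε.eventually_lt_const one_pos] with n hn f hf
  refine norm_eq_zero.mp (le_antisymm ?_ (norm_nonneg f))
  have := (hbelow f).trans (mul_le_mul_of_nonneg_left
    (norm_one_sub_smul_apply_le_of_smul_apply_eq_self hf m) (norm_nonneg _))
  nlinarith [norm_nonneg f]

end FixedVector

theorem statement10_general (T : L2op) (K : ℝ → ℝ → ℂ)
    (tau : ℕ → ℝ) (P : ℕ → L2op) (hiv : ConditionIV K T tau P)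
    (m : ℕ)
    (hconv : Tendsto (fun n => ‖(T - P n * T) * (P n * T) ^ m‖) atTop (𝓝 (0 : ℝ)))
    (lam : ℂ) (hreg : lam ∈ regularSet T)
    (xi : ℕ → ℂ) (hxi : ∀ n, xi n ∉ regularSet (P n * T)) :
    ¬ Tendsto xi atTop (𝓝 lam) := by
  intro hxi_lim
  obtain ⟨n, hn⟩ := (eventually_eq_zero_of_smul_apply_eq_self hreg hxi_lim hconv).exists
  obtain ⟨f, hf0, hf⟩ :=
    ((hiv.nuclear n).isCompactOperator.smul (xi n)).exists_ne_zero_apply_eq_self (hxi n)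
  exact hf0 (hn f hf)

theorem statement10 (T : L2op) (K : ℝ → ℝ → ℂ) (kt kt' : ℝ → L2)
    (hK : IsK0Kernel K kt kt') (hT : IsInducedBy T K)
    (tau : ℕ → ℝ) (P : ℕ → L2op) (hiv : ConditionIV K T tau P)
    (m : ℕ) (hm : 1 ≤ m)
    (hconv : Tendsto (fun n => ‖(T - P n * T) * (P n * T) ^ m‖) atTop (𝓝 (0 : ℝ)))
    (lam : ℂ) (hne : lam ≠ 0) (hreg : lam ∈ regularSet T)
    (xi : ℕ → ℂ) (hxi : ∀ n, xi n ∉ regularSet (P n * T)) :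
    ¬ Tendsto xi atTop (𝓝 lam) :=
  statement10_general T K tau P hiv m hconv lam hreg xi hxi
end
end
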